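/- arXiv:1903.00806 — 4 statements merged into one kernel-verified Lean document; each statement's English description precedes it below -/
import Mathlib

section
/- Let η be the real root of t^3 - 11t^2 + 7t - 1 with η > 10, and let ν = ((-3η^2+32η-9)/4, (5η^2-54η+25)/4, (η^2-10η-3)/4, (-3η^2+32η-9)/4). Then P·ν = η·ν, where P = [[3,3,5,4],[1,2,3,3],[1,1,2,1],[2,3,5,5]]. -/
theorem P_mulVec_nu_eq_eta_smul_nu
    (η : ℝ) (hη : η ^ 3 - 11 * η ^ 2 + 7 * η - 1 = 0) (hη10 : 10 < η) :
    let ν : Fin 4 → ℝ :=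
      ![(-3 * η ^ 2 + 32 * η - 9) / 4, (5 * η ^ 2 - 54 * η + 25) / 4,
        (η ^ 2 - 10 * η - 3) / 4, (-3 * η ^ 2 + 32 * η - 9) / 4]
    Matrix.mulVec (!![3,3,5,4; 1,2,3,3; 1,1,2,1; 2,3,5,5] : Matrix (Fin 4) (Fin 4) ℝ) ν
      = η • ν := by
  intro ν
  have h3 : η ^ 3 = 11 * η ^ 2 - 7 * η + 1 := by linarith
  funext i
  fin_cases i <;>
    simp [ν, Matrix.mulVec, dotProduct, Fin.sum_univ_four] <;>
    ring_nf <;> nlinarith [hη, sq_nonneg η]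
end

section
/- Let η be the real root of t^3 - 11t^2 + 7t - 1 with η > 10, and let ν = ((-3η^2+32η-9)/4, (5η^2-54η+25)/4, (η^2-10η-3)/4, (-3η^2+32η-9)/4). Then all four components of ν are strictly positive and their sum equals 1. -/
theorem nu_positive_and_sums_to_one
    (η : ℝ) (hη : η ^ 3 - 11 * η ^ 2 + 7 * η - 1 = 0) (hη10 : 10 < η) :
    let ν : Fin 4 → ℝ :=
      ![(-3 * η ^ 2 + 32 * η - 9) / 4, (5 * η ^ 2 - 54 * η + 25) / 4,
        (η ^ 2 - 10 * η - 3) / 4, (-3 * η ^ 2 + 32 * η - 9) / 4]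
    (∀ i, 0 < ν i) ∧ (∑ i, ν i) = 1 := by
  intro ν
  have hub : η < 10.37 := by nlinarith [sq_nonneg η, sq_nonneg (η - 10.37), sq_nonneg (η - 10)]
  have hlb : η > 10.32 := by nlinarith [sq_nonneg η, sq_nonneg (η - 10.32), sq_nonneg (η - 10)]
  have h1 : 0 < (-3 * η ^ 2 + 32 * η - 9) / 4 := by nlinarith [sq_nonneg (η - 10.32)]
  have h2 : 0 < (5 * η ^ 2 - 54 * η + 25) / 4 := by nlinarith [sq_nonneg (η - 10.37)]
  have h3 : 0 < (η ^ 2 - 10 * η - 3) / 4 := by nlinarith [sq_nonneg (η - 10.37)]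
  refine ⟨fun i => ?_, ?_⟩
  · fin_cases i <;> simp [ν] <;> linarith
  · simp [ν, Fin.sum_univ_four]
    ring
end

section
/- The vector λ = Qν, where ν is the Perron probability eigenvector of P, has all entries strictly positive and total sum |λ| = λ1+λ2+λ3+λ4 strictly greater than 1. -/
theorem lambda_positive_and_sum_gt_one
    (η : ℝ) (hη : η ^ 3 - 11 * η ^ 2 + 7 * η - 1 = 0) (hη10 : 10 < η) :
    let ν : Fin 4 → ℝ :=
      ![(-3 * η ^ 2 + 32 * η - 9) / 4, (5 * η ^ 2 - 54 * η + 25) / 4,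
        (η ^ 2 - 10 * η - 3) / 4, (-3 * η ^ 2 + 32 * η - 9) / 4]
    let lam : Fin 4 → ℝ :=
      Matrix.mulVec (!![1,0,0,0; 0,1,1,0; 0,0,1,1; 0,1,0,0] : Matrix (Fin 4) (Fin 4) ℝ) ν
    (∀ i, 0 < lam i) ∧ 1 < ∑ i, lam i := by
  intro ν lam
  have hub : η < 10.34 := by nlinarith [sq_nonneg (η - 10.34), sq_nonneg (η - 10)]
  have hlb : (10.33 : ℝ) < η := by nlinarith [sq_nonneg (η - 10.33), sq_nonneg (η - 10)]
  have hq1 : 0 < -3 * η ^ 2 + 32 * η - 9 := by nlinarith [mul_pos (sub_pos.mpr hlb) (sub_pos.mpr hub)]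
  have hq2 : 0 < 5 * η ^ 2 - 54 * η + 25 := by nlinarith
  have hq3 : 0 < η ^ 2 - 10 * η - 3 := by nlinarith
  constructor
  · intro i
    fin_cases i <;>
      simp [lam, ν, Matrix.mulVec, dotProduct, Fin.sum_univ_four, Matrix.cons_val_zero, Matrix.cons_val_one, Matrix.head_cons, Matrix.cons_val_succ, Matrix.head_fin_const, Matrix.cons_val_fin_one, Matrix.empty_val', Matrix.cons_val', Matrix.of_apply, Matrix.vecHead, Matrix.vecTail, Pi.smul_apply, Function.comp, smul_eq_mul] <;> nlinarith
  · have : ∑ i, lam i = (3 * η ^ 2 - 32 * η + 13) / 2 := by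
      simp [lam, ν, Matrix.mulVec, dotProduct, Fin.sum_univ_four, Matrix.cons_val_zero, Matrix.cons_val_one, Matrix.head_cons, Matrix.cons_val_succ, Matrix.head_fin_const, Matrix.cons_val_fin_one, Matrix.empty_val', Matrix.cons_val', Matrix.of_apply, Matrix.vecHead, Matrix.vecTail, Pi.smul_apply, Function.comp, smul_eq_mul]
      ring
    rw [this]
    nlinarith
end

section
/- Let T : I → I be an n-IET, I' ⊂ I an admissible interval satisfying (H3) (the exhaustivity length condition), and T' the Poincaré (first-return) map of T on I'. If T' is topologically transitive (has a dense orbit in I'), then T is topologically transitive. -/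
/-!
On each interval `J i` of the admissible partition the iterates `T^[j]`, `j < r i`, are affine
isometries: `T^[j] '' J i` never contains a breakpoint of `T`, since the interior breakpoints lie in
`B` and, `T` being injective off `0`, pre-return iterates of distinct points of `I'` never meet.
The same injectivity makes the towers `T^[j] '' J i` pairwise disjoint, so by (H3) they fill `I`
up to a null set and their union is dense in `I`. A dense `T'`-orbit is part of a `T`-orbit and is
dense in each `J i`, and `T^[j]` carries it onto a dense subset of `T^[j] '' J i`.
-/

open Set Function MeasureTheory

def IsAffineIsometryOn (f : ℝ → ℝ) (s : Set ℝ) : Prop :=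
  ∃ ε : ℝ, (ε = 1 ∨ ε = -1) ∧ ∃ b : ℝ, ∀ y ∈ s, f y = ε * y + b

theorem isAffineIsometryOn_id (s : Set ℝ) : IsAffineIsometryOn id s :=
  ⟨1, .inl rfl, 0, fun y _ => by simp⟩

namespace IsAffineIsometryOn

variable {f g : ℝ → ℝ} {s t : Set ℝ}

theorem comp (hg : IsAffineIsometryOn g t) (hf : IsAffineIsometryOn f s) (hst : MapsTo f s t) :
    IsAffineIsometryOn (g ∘ f) s := by
  obtain ⟨ε, hε, b, hf⟩ := hf
  obtain ⟨ε', hε', b', hg⟩ := hg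
  refine ⟨ε' * ε, ?_, ε' * b + b', fun y hy => ?_⟩
  · rcases hε with rfl | rfl <;> rcases hε' with rfl | rfl <;> norm_num
  · rw [comp_apply, hg _ (hst hy), hf y hy]
    ring

theorem image_Ioo {c d : ℝ} (hf : IsAffineIsometryOn f (Ioo c d)) :
    ∃ lo hi : ℝ, hi - lo = d - c ∧ f '' Ioo c d = Ioo lo hi := by
  obtain ⟨ε, hε, b, hf⟩ := hf
  rw [image_congr hf]
  rcases hε with rfl | rfl
  · refine ⟨c + b, d + b, by ring, ?_⟩
    simp only [one_mul, image_add_const_Ioo]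
  · refine ⟨b - d, b - c, by ring, ?_⟩
    simp only [neg_one_mul, neg_add_eq_sub, image_const_sub_Ioo]

theorem measurableSet_image_Ioo {c d : ℝ} (hf : IsAffineIsometryOn f (Ioo c d)) :
    MeasurableSet (f '' Ioo c d) := by
  obtain ⟨lo, hi, -, himg⟩ := hf.image_Ioo
  exact himg ▸ measurableSet_Ioo

theorem volume_image_Ioo {c d : ℝ} (hf : IsAffineIsometryOn f (Ioo c d)) :
    volume (f '' Ioo c d) = ENNReal.ofReal (d - c) := by
  obtain ⟨lo, hi, hlen, himg⟩ := hf.image_Ioo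
  rw [himg, Real.volume_Ioo, hlen]

theorem image_subset_closure_image (hf : IsAffineIsometryOn f s) (hs : IsOpen s)
    (hst : s ⊆ closure t) : f '' s ⊆ closure (f '' (s ∩ t)) := by
  obtain ⟨ε, -, b, hf⟩ := hf
  have hcont : Continuous fun y => ε * y + b := by fun_prop
  rw [image_congr hf, image_congr fun y hy => hf y hy.1]
  calc (fun y => ε * y + b) '' s
      ⊆ (fun y => ε * y + b) '' closure (s ∩ t) :=
        image_mono fun y hy => hs.inter_closure ⟨hy, hst hy⟩
    _ ⊆ closure ((fun y => ε * y + b) '' (s ∩ t)) := image_closure_subset_closure_image hcont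

theorem iterate_image_subset_closure_range {T : ℝ → ℝ} {j : ℕ} (hT : IsAffineIsometryOn T^[j] s)
    (hs : IsOpen s) {z : ℝ} (hz : s ⊆ closure (range fun k => T^[k] z)) :
    T^[j] '' s ⊆ closure (range fun k => T^[k] z) := by
  refine (hT.image_subset_closure_image hs hz).trans (closure_minimal ?_ isClosed_closure)
  rintro _ ⟨_, ⟨-, m, rfl⟩, rfl⟩
  exact subset_closure ⟨j + m, iterate_add_apply _ _ _ _⟩

end IsAffineIsometryOn

theorem exists_Ioo_subset_Ioo_castSucc_succ {α : Type*} [LinearOrder α] {n : ℕ}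
    {x : Fin (n + 1) → α} {lo hi : α} (hlohi : lo < hi) (h0 : x 0 ≤ lo)
    (hlast : hi ≤ x (Fin.last n)) (hx : ∀ m, x m ∉ Ioo lo hi) :
    ∃ m : Fin n, Ioo lo hi ⊆ Ioo (x m.castSucc) (x m.succ) := by
  classical
  let S := Finset.univ.filter fun m => x m ≤ lo
  have hS : S.Nonempty := ⟨0, by simpa [S] using h0⟩
  have hmax : x (S.max' hS) ≤ lo := by simpa [S] using S.max'_mem hS
  obtain ⟨m, hm⟩ : ∃ m : Fin n, m.castSucc = S.max' hS := by
    refine Fin.exists_castSucc_eq.mpr fun h => ?_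
    exact (hlast.trans (h ▸ hmax)).not_gt hlohi
  have hsucc : lo < x m.succ := by
    by_contra! h
    exact (S.le_max' _ (by simpa [S] using h)).not_gt (hm ▸ Fin.castSucc_lt_succ)
  refine ⟨m, Ioo_subset_Ioo (hm ▸ hmax) (not_lt.mp fun h => hx m.succ ⟨hsucc, h⟩)⟩

theorem StrictMono.notMem_Ioo_castSucc_succ {α : Type*} [Preorder α] {n : ℕ}
    {x : Fin (n + 1) → α} (hx : StrictMono x) (m : Fin (n + 1)) (i : Fin n) :
    x m ∉ Ioo (x i.castSucc) (x i.succ) := fun h =>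
  (Fin.castSucc_lt_iff_succ_le.mp (hx.lt_iff_lt.mp h.1)).not_gt (hx.lt_iff_lt.mp h.2)

theorem Monotone.Ioo_castSucc_succ_subset_Ioc {α : Type*} [Preorder α] {n : ℕ}
    {x : Fin (n + 1) → α} (hx : Monotone x) (i : Fin n) :
    Ioo (x i.castSucc) (x i.succ) ⊆ Ioc (x 0) (x (Fin.last n)) :=
  (Ioo_subset_Ioo (hx (Fin.zero_le _)) (hx (Fin.le_last _))).trans Ioo_subset_Ioc_self

theorem StrictMono.mem_Ioc_of_ne_zero {α : Type*} [Preorder α] {n : ℕ}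
    {x : Fin (n + 1) → α} (hx : StrictMono x) {m : Fin (n + 1)} (hm : m ≠ 0) :
    x m ∈ Ioc (x 0) (x (Fin.last n)) :=
  ⟨hx (Fin.pos_of_ne_zero hm), hx.monotone (Fin.le_last m)⟩

theorem StrictMono.pairwise_disjoint_Ioo_castSucc_succ {α : Type*} [Preorder α] {n : ℕ}
    {x : Fin (n + 1) → α} (hx : StrictMono x) :
    Pairwise (Disjoint on fun i : Fin n => Ioo (x i.castSucc) (x i.succ)) := by
  refine (pairwise_disjoint_on _).mpr fun i j hij => disjoint_left.mpr fun y hi hj => ?_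
  have : x i.succ ≤ x j.castSucc := hx.monotone (Fin.succ_le_castSucc_iff.mpr hij)
  exact lt_asymm (hi.2.trans_le this) hj.1

theorem Set.InjOn.eq_of_iterate_eq {α : Type*} {f : α → α} {s : Set α} (hf : InjOn f s)
    {p : ℕ} {u w : α} (hu : ∀ k < p, f^[k] u ∈ s) (hw : ∀ k < p, f^[k] w ∈ s)
    (h : f^[p] u = f^[p] w) : u = w := by
  induction p with
  | zero => exact h
  | succ p ih =>
    rw [iterate_succ_apply', iterate_succ_apply'] at h
    exact ih (fun k hk => hu k (by omega)) (fun k hk => hw k (by omega))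
      (hf (hu p p.lt_succ_self) (hw p p.lt_succ_self) h)

def IsFirstReturnTime {α : Type*} (f : α → α) (A : Set α) (N : α → ℕ) : Prop :=
  ∀ y ∈ A, 1 ≤ N y ∧ f^[N y] y ∈ A ∧ ∀ k, 1 ≤ k → k < N y → f^[k] y ∉ A

namespace IsFirstReturnTime

variable {α : Type*} {f : α → α} {A : Set α} {N : α → ℕ}

theorem range_iterate_subset (hN : IsFirstReturnTime f A N) {g : α → α}
    (hg : ∀ y ∈ A, g y = f^[N y] y) {z : α} (hz : z ∈ A) :
    range (fun k => g^[k] z) ⊆ range (fun k => f^[k] z) := by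
  have key : ∀ k, g^[k] z ∈ A ∧ ∃ m, f^[m] z = g^[k] z := by
    intro k
    induction k with
    | zero => exact ⟨hz, 0, rfl⟩
    | succ k ih =>
      obtain ⟨hA, m, hm⟩ := ih
      rw [iterate_succ_apply', hg _ hA]
      exact ⟨(hN _ hA).2.1, N (g^[k] z) + m, by rw [iterate_add_apply, hm]⟩
  rintro _ ⟨k, rfl⟩
  exact (key k).2

theorem iterate_mem_diff_singleton (hN : IsFirstReturnTime f A N) {X : Set α} {p y : α}
    (hf : MapsTo f X X) (hAX : A ⊆ X) (hp : p ∈ A) (hy : y ∈ A \ {p}) {k : ℕ} (hk : k < N y) :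
    f^[k] y ∈ X \ {p} := by
  rcases Nat.eq_zero_or_pos k with rfl | hk0
  · exact ⟨hAX hy.1, hy.2⟩
  · refine ⟨hf.iterate k (hAX hy.1), fun hkp => ?_⟩
    exact (hN y hy.1).2.2 k hk0 hk (mem_singleton_iff.mp hkp ▸ hp)

theorem eq_of_iterate_eq (hN : IsFirstReturnTime f A N) {X : Set α} {p : α}
    (hf : MapsTo f X X) (hinj : InjOn f (X \ {p})) (hAX : A ⊆ X) (hp : p ∈ A)
    ⦃y₁ y₂ : α⦄ (hy₁ : y₁ ∈ A \ {p}) (hy₂ : y₂ ∈ A \ {p}) ⦃j₁ j₂ : ℕ⦄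
    (hj₁ : j₁ < N y₁) (hj₂ : j₂ < N y₂) (h : f^[j₁] y₁ = f^[j₂] y₂) : j₁ = j₂ ∧ y₁ = y₂ := by
  wlog hle : j₁ ≤ j₂ generalizing y₁ y₂ j₁ j₂
  · obtain ⟨h₁, h₂⟩ := this hy₂ hy₁ hj₂ hj₁ h.symm (by omega)
    exact ⟨h₁.symm, h₂.symm⟩
  have hy : y₁ = f^[j₂ - j₁] y₂ := by
    refine hinj.eq_of_iterate_eq (p := j₁)
      (fun k hk => hN.iterate_mem_diff_singleton hf hAX hp hy₁ (by omega))
      (fun k hk => ?_) ?_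
    · rw [← iterate_add_apply]
      exact hN.iterate_mem_diff_singleton hf hAX hp hy₂ (by omega)
    · rwa [← iterate_add_apply, Nat.add_sub_cancel' hle]
  rcases Nat.eq_zero_or_pos (j₂ - j₁) with h0 | hpos
  · exact ⟨by omega, by rwa [h0, iterate_zero_apply] at hy⟩
  · exact absurd (hy ▸ hy₁.1) ((hN y₂ hy₂.1).2.2 _ hpos (by omega))

end IsFirstReturnTime

theorem subset_closure_of_measure_diff_eq_zero {X : Type*} [TopologicalSpace X]
    [MeasurableSpace X] {μ : Measure X} [μ.IsOpenPosMeasure] {U V : Set X} (hV : IsOpen V)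
    (h : μ (V \ U) = 0) : V ⊆ closure U := by
  have hopen : IsOpen (V \ closure U) := hV.sdiff isClosed_closure
  rw [← sdiff_eq_empty, ← hopen.measure_eq_zero_iff μ]
  exact measure_mono_null (sdiff_subset_sdiff_right subset_closure) h

theorem Icc_subset_closure_of_volume_eq {U : Set ℝ} {a b : ℝ} (hab : a < b)
    (hU : MeasurableSet U) (hUab : U ⊆ Icc a b) (hvol : volume U = ENNReal.ofReal (b - a)) :
    Icc a b ⊆ closure U := by
  have hnull : volume (Icc a b \ U) = 0 := by
    rw [measure_sdiff hUab hU.nullMeasurableSet (hvol ▸ ENNReal.ofReal_ne_top), hvol,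
      Real.volume_Icc, tsub_self]
  rw [← closure_Ioo hab.ne]
  exact closure_minimal (subset_closure_of_measure_diff_eq_zero isOpen_Ioo
    (measure_mono_null (sdiff_subset_sdiff_left Ioo_subset_Icc_self) hnull)) isClosed_closure

theorem isAffineIsometryOn_iterate {T : ℝ → ℝ} {n : ℕ} {x : Fin (n + 1) → ℝ}
    (hiso : ∀ i : Fin n, IsAffineIsometryOn T (Ioo (x i.castSucc) (x i.succ)))
    (hT : MapsTo T (Icc (x 0) (x (Fin.last n))) (Icc (x 0) (x (Fin.last n))))
    {c d : ℝ} (hcd : c < d) (hJ : Ioo c d ⊆ Icc (x 0) (x (Fin.last n))) {r : ℕ}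
    (hne : ∀ k < r, ∀ y ∈ Ioo c d, ∀ m, m ≠ 0 → m ≠ Fin.last n → T^[k] y ≠ x m) :
    ∀ j ≤ r, IsAffineIsometryOn T^[j] (Ioo c d) := by
  intro j
  induction j with
  | zero => exact fun _ => isAffineIsometryOn_id _
  | succ j ih =>
    intro hj
    have hj' := ih (by omega)
    obtain ⟨lo, hi, hlen, himg⟩ := hj'.image_Ioo
    have hlohi : lo < hi := by linarith
    have hsub : Ioo lo hi ⊆ Ioo (x 0) (x (Fin.last n)) := by
      refine (isOpen_Ioo.subset_interior_iff.mpr ?_).trans interior_Icc.subset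
      exact himg ▸ ((hT.iterate j).mono_left hJ).image_subset
    obtain ⟨h0, hlast⟩ := (Ioo_subset_Ioo_iff hlohi).mp hsub
    obtain ⟨m, hm⟩ := exists_Ioo_subset_Ioo_castSucc_succ hlohi h0 hlast fun m hxm => by
      have hm0 : m ≠ 0 := by rintro rfl; exact (hsub hxm).1.false
      have hml : m ≠ Fin.last n := by rintro rfl; exact (hsub hxm).2.false
      obtain ⟨y, hy, hyx⟩ := himg ▸ hxm
      exact hne j (by omega) y hy m hm0 hml hyx
    rw [iterate_succ']
    exact (hiso m).comp hj' ((mapsTo_image _ _).mono_right (himg ▸ hm))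

theorem Icc_subset_closure_iUnion_towers {T : ℝ → ℝ} {n : ℕ} {x : Fin (n + 1) → ℝ}
    (hx : StrictMono x) {r : Fin n → ℕ} {a : ℝ} (ha : 0 < a)
    (haff : ∀ i (j : Fin (r i)), IsAffineIsometryOn T^[j] (Ioo (x i.castSucc) (x i.succ)))
    (hmaps : ∀ i (j : Fin (r i)), MapsTo T^[j] (Ioo (x i.castSucc) (x i.succ)) (Icc 0 a))
    (hsep : ∀ i₁ i₂ (j₁ : Fin (r i₁)) (j₂ : Fin (r i₂)), ∀ y₁ ∈ Ioo (x i₁.castSucc) (x i₁.succ),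
      ∀ y₂ ∈ Ioo (x i₂.castSucc) (x i₂.succ), T^[j₁] y₁ = T^[j₂] y₂ → (j₁ : ℕ) = j₂ ∧ y₁ = y₂)
    (hsum : ∑ i, (r i : ℝ) * (x i.succ - x i.castSucc) = a) :
    Icc 0 a ⊆ closure (⋃ p : Σ i, Fin (r i), T^[p.2] '' Ioo (x p.1.castSucc) (x p.1.succ)) := by
  have hdisj : Pairwise (Disjoint on fun p : Σ i, Fin (r i) =>
      T^[p.2] '' Ioo (x p.1.castSucc) (x p.1.succ)) := by
    rintro ⟨i₁, j₁⟩ ⟨i₂, j₂⟩ hne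
    refine disjoint_left.mpr ?_
    rintro _ ⟨y₁, hy₁, rfl⟩ ⟨y₂, hy₂, h⟩
    obtain ⟨hj, rfl⟩ := hsep i₁ i₂ j₁ j₂ y₁ hy₁ y₂ hy₂ h.symm
    obtain rfl : i₁ = i₂ := by
      by_contra hi
      exact (hx.pairwise_disjoint_Ioo_castSucc_succ hi).ne_of_mem hy₁ hy₂ rfl
    exact hne (by rw [Fin.ext hj])
  have hmeas : ∀ p : Σ i, Fin (r i), MeasurableSet (T^[p.2] '' Ioo (x p.1.castSucc) (x p.1.succ)) :=
    fun p => (haff p.1 p.2).measurableSet_image_Ioo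
  refine Icc_subset_closure_of_volume_eq ha (.iUnion hmeas)
    (iUnion_subset fun p => (hmaps p.1 p.2).image_subset) ?_
  have hlen : ∀ i : Fin n, 0 ≤ x i.succ - x i.castSucc := fun i =>
    sub_nonneg.mpr (hx.monotone (Fin.castSucc_le_succ i))
  simp only [measure_iUnion hdisj hmeas, tsum_fintype, Fintype.sum_sigma,
    (haff _ _).volume_image_Ioo, Finset.sum_const, Finset.card_univ, Fintype.card_fin,
    nsmul_eq_mul, sub_zero, ← hsum, ENNReal.ofReal_sum_of_nonneg fun i _ =>
      mul_nonneg (Nat.cast_nonneg _) (hlen i), ENNReal.ofReal_mul (Nat.cast_nonneg _),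
    ENNReal.ofReal_natCast]

theorem transitivity_lifts_from_return_map_general
    (a a' : ℝ) (ha' : 0 < a') (haa : a' < a) (n : ℕ)
    -- T is an n-IET on I = [0,a]
    (x : Fin (n + 1) → ℝ)
    (hx0 : x 0 = 0) (hxn : x (Fin.last n) = a)
    (T : ℝ → ℝ)
    (hmaps : Set.MapsTo T (Set.Icc 0 a) (Set.Icc 0 a))
    (hinj : Set.InjOn T (Set.Icc 0 a \ {0}))
    (hiso : ∀ i : Fin n, ∃ ε : ℝ, (ε = 1 ∨ ε = -1) ∧ ∃ b : ℝ,
      ∀ y ∈ Set.Ioo (x i.castSucc) (x i.succ), T y = ε * y + b)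
    (D : Set ℝ) (hD : D = {y | ∃ i : Fin (n + 1), i ≠ 0 ∧ i ≠ Fin.last n ∧ y = x i})
    -- first-return time N to I' = [0,a']
    (N : ℝ → ℕ)
    (hN : ∀ y ∈ Set.Icc 0 a', 1 ≤ N y ∧ T^[N y] y ∈ Set.Icc 0 a' ∧
      ∀ k, 1 ≤ k → k < N y → T^[k] y ∉ Set.Icc 0 a')
    -- admissibility: a partition of I' whose pre-return iterates form B
    (x' : Fin (n + 1) → ℝ) (hmono' : StrictMono x')
    (hx'0 : x' 0 = 0) (hx'n : x' (Fin.last n) = a')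
    (B : Set ℝ)
    (hB : B = {y | ∃ i : Fin (n + 1), i ≠ 0 ∧ ∃ k < N (x' i), y = T^[k] (x' i)})
    (hB1 : D ⊆ B)
    -- constant return times on the partition intervals, and (H3)
    (r : Fin n → ℕ)
    (hret : ∀ i : Fin n, ∀ y ∈ Set.Ioo (x' i.castSucc) (x' i.succ), N y = r i)
    (hH3 : ∑ i, (r i : ℝ) * (x' i.succ - x' i.castSucc) = a)
    -- the Poincaré map T'
    (T' : ℝ → ℝ) (hT' : ∀ y ∈ Set.Icc 0 a', T' y = T^[N y] y)
    -- T' is topologically transitive on I'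
    (htrans : ∃ z ∈ Set.Icc (0:ℝ) a',
      Set.Icc (0:ℝ) a' ⊆ closure {w | ∃ k : ℕ, T'^[k] z = w}) :
    -- then T is topologically transitive on I
    ∃ z ∈ Set.Icc (0:ℝ) a,
      Set.Icc (0:ℝ) a ⊆ closure {w | ∃ k : ℕ, T^[k] z = w} := by
  subst hD hB
  obtain ⟨z, hz, hdense⟩ := htrans
  have hI' : Icc 0 a' ⊆ Icc 0 a := Icc_subset_Icc_right haa.le
  have hI'0 : Icc 0 a' \ {0} = Ioc (x' 0) (x' (Fin.last n)) := by
    rw [Icc_sdiff_left, hx'0, hx'n]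
  have hJ : ∀ i : Fin n, Ioo (x' i.castSucc) (x' i.succ) ⊆ Icc 0 a' \ {0} := fun i =>
    hI'0 ▸ hmono'.monotone.Ioo_castSucc_succ_subset_Ioc i
  have hJa : ∀ i : Fin n, Ioo (x' i.castSucc) (x' i.succ) ⊆ Icc 0 a := fun i =>
    (hJ i).trans (sdiff_subset.trans hI')
  have hsep := IsFirstReturnTime.eq_of_iterate_eq hN hmaps hinj hI' ⟨le_rfl, ha'.le⟩
  have hbreak : ∀ i, ∀ k < r i, ∀ y ∈ Ioo (x' i.castSucc) (x' i.succ),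
      ∀ m, m ≠ 0 → m ≠ Fin.last n → T^[k] y ≠ x m := by
    intro i k hk y hy m hm0 hml hkm
    obtain ⟨m', hm', l, hl, hl'⟩ := hB1 ⟨m, hm0, hml, hkm⟩
    obtain ⟨-, rfl⟩ :=
      hsep (hJ i hy) (hI'0 ▸ hmono'.mem_Ioc_of_ne_zero hm') (hret i y hy ▸ hk) hl hl'
    exact hmono'.notMem_Ioo_castSucc_succ m' i hy
  have haff : ∀ i (j : Fin (r i)), IsAffineIsometryOn T^[j] (Ioo (x' i.castSucc) (x' i.succ)) :=
    fun i j => isAffineIsometryOn_iterate hiso (hx0 ▸ hxn ▸ hmaps) (hmono' Fin.castSucc_lt_succ)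
      (hx0 ▸ hxn ▸ hJa i) (hbreak i) j j.2.le
  have hcover := Icc_subset_closure_iUnion_towers hmono' (ha'.trans haa) haff
    (fun i j => (hmaps.iterate j).mono_left (hJa i))
    (fun i₁ i₂ j₁ j₂ y₁ hy₁ y₂ hy₂ => hsep (hJ i₁ hy₁) (hJ i₂ hy₂)
      (j₁.2.trans_eq (hret i₁ y₁ hy₁).symm) (j₂.2.trans_eq (hret i₂ y₂ hy₂).symm)) hH3
  have horbit := IsFirstReturnTime.range_iterate_subset hN hT' hz
  refine ⟨z, hI' hz, hcover.trans ?_⟩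
  refine closure_minimal (iUnion_subset fun ⟨i, j⟩ => ?_) isClosed_closure
  exact (haff i j).iterate_image_subset_closure_range isOpen_Ioo
    (((hJ i).trans sdiff_subset).trans (hdense.trans (closure_mono horbit)))

/-- If the Poincaré (first-return) map of an IET on an admissible interval
satisfying the exhaustivity condition (H3) is topologically transitive, then so
is the IET itself. -/
theorem transitivity_lifts_from_return_map
    (a a' : ℝ) (ha' : 0 < a') (haa : a' < a) (n : ℕ) (hn : 0 < n)
    -- T is an n-IET on I = [0,a]
    (x : Fin (n + 1) → ℝ) (hmono : StrictMono x)
    (hx0 : x 0 = 0) (hxn : x (Fin.last n) = a)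
    (T : ℝ → ℝ)
    (hmaps : Set.MapsTo T (Set.Icc 0 a) (Set.Icc 0 a))
    (hinj : Set.InjOn T (Set.Icc 0 a \ {0}))
    (hiso : ∀ i : Fin n, ∃ ε : ℝ, (ε = 1 ∨ ε = -1) ∧ ∃ b : ℝ,
      ∀ y ∈ Set.Ioo (x i.castSucc) (x i.succ), T y = ε * y + b)
    (D : Set ℝ) (hD : D = {y | ∃ i : Fin (n + 1), i ≠ 0 ∧ i ≠ Fin.last n ∧ y = x i})
    -- first-return time N to I' = [0,a']
    (N : ℝ → ℕ)
    (hN : ∀ y ∈ Set.Icc 0 a', 1 ≤ N y ∧ T^[N y] y ∈ Set.Icc 0 a' ∧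
      ∀ k, 1 ≤ k → k < N y → T^[k] y ∉ Set.Icc 0 a')
    -- admissibility: a partition of I' whose pre-return iterates form B
    (x' : Fin (n + 1) → ℝ) (hmono' : StrictMono x')
    (hx'0 : x' 0 = 0) (hx'n : x' (Fin.last n) = a')
    (B : Set ℝ)
    (hB : B = {y | ∃ i : Fin (n + 1), i ≠ 0 ∧ ∃ k < N (x' i), y = T^[k] (x' i)})
    (hB1 : D ⊆ B) (hB2 : a' ∈ T '' B)
    -- constant return times on the partition intervals, and (H3)
    (r : Fin n → ℕ)
    (hret : ∀ i : Fin n, ∀ y ∈ Set.Ioo (x' i.castSucc) (x' i.succ), N y = r i)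
    (hH3 : ∑ i, (r i : ℝ) * (x' i.succ - x' i.castSucc) = a)
    -- the Poincaré map T'
    (T' : ℝ → ℝ) (hT' : ∀ y ∈ Set.Icc 0 a', T' y = T^[N y] y)
    -- T' is topologically transitive on I'
    (htrans : ∃ z ∈ Set.Icc (0:ℝ) a',
      Set.Icc (0:ℝ) a' ⊆ closure {w | ∃ k : ℕ, T'^[k] z = w}) :
    -- then T is topologically transitive on I
    ∃ z ∈ Set.Icc (0:ℝ) a,
      Set.Icc (0:ℝ) a ⊆ closure {w | ∃ k : ℕ, T^[k] z = w} :=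
  transitivity_lifts_from_return_map_general a a' ha' haa n x hx0 hxn T hmaps hinj hiso D hD N hN x'
    hmono' hx'0 hx'n B hB hB1 r hret hH3 T' hT' htrans
end
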